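/- Let G and H be unital associative F-algebras with all triple commutators zero. For n ≥ 1 and g_i ∈ G, h_i ∈ H, the left-normed commutator c_{2n+1} = [g_1 ⊗ h_1, ..., g_{2n+1} ⊗ h_{2n+1}] in G ⊗ H equals [g_1,g_2][g_3,g_4]···[g_{2n-1},g_{2n}] g_{2n+1} ⊗ [h_1 h_2, h_3][h_4,h_5]···[h_{2n},h_{2n+1}] + [g_2 g_1, g_3][g_4,g_5]···[g_{2n},g_{2n+1}] ⊗ [h_1,h_2][h_3,h_4]···[h_{2n-1},h_{2n}] h_{2n+1}. -/

import Mathlib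

/-!
In `G ⊗ H` one has `[a ⊗ u, b ⊗ v] = [a, b] ⊗ uv + ba ⊗ [u, v]`, so the second summand vanishes
when `u` is central and the first when `a` is. Commutators being central in `G` and in `H`,
`c₂ₙ₊₁` is a sum `(A x) ⊗ U + V ⊗ (Q y)` with `A, U, V, Q` central. Bracketing it with
`g₂ₙ₊₂ ⊗ h₂ₙ₊₂` and then with `g₂ₙ₊₃ ⊗ h₂ₙ₊₃` keeps one summand of each expansion, and the result is
`(A [x, g₂ₙ₊₂] g₂ₙ₊₃) ⊗ (U [h₂ₙ₊₂, h₂ₙ₊₃]) + (V [g₂ₙ₊₂, g₂ₙ₊₃]) ⊗ (Q [y, h₂ₙ₊₂] h₂ₙ₊₃)`, which has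
the same shape: induction on `n`, starting from `c₃`.
-/

open scoped TensorProduct

/-- Left-normed commutator: `lc a [b₁,...,bₙ] = [a, b₁, ..., bₙ]`. -/
def lc {A : Type*} [Ring A] : A → List A → A
  | a, [] => a
  | a, b :: l => lc ⁅a, b⁆ l

/-- Left-normed commutator of a list; `lcomm [a₁,...,aₙ] = [a₁,...,aₙ]`, `lcomm [] = 0`. -/
def lcomm {A : Type*} [Ring A] : List A → A
  | [] => 0
  | a :: l => lc a l

/-- `Tideal A n` = two-sided ideal of `A` generated by all left-normed commutators of length `n`. -/
def Tideal (A : Type*) [Ring A] (n : ℕ) : TwoSidedIdeal A :=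
  TwoSidedIdeal.span {x | ∃ l : List A, l.length = n ∧ x = lcomm l}

section Development

attribute [local instance] LieRing.ofAssociativeRing

section Commutators

variable {A : Type*} [Ring A]

theorem lc_append_singleton (a : A) (l : List A) (b : A) : lc a (l ++ [b]) = ⁅lc a l, b⁆ := by
  induction l generalizing a with
  | nil => rfl
  | cons c l ih => exact ih ⁅a, c⁆

theorem lcomm_ofFn_succ_succ (f : ℕ → A) (n : ℕ) :
    lcomm (List.ofFn fun i : Fin (n + 2) => f i)
      = ⁅lcomm (List.ofFn fun i : Fin (n + 1) => f i), f (n + 1)⁆ := by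
  rw [List.ofFn_succ' (n := n + 1), List.concat_eq_append, List.ofFn_succ, List.ofFn_succ]
  exact lc_append_singleton (f 0) _ _

theorem lie_mem_center_of_lie_lie_eq_zero (hA : ∀ a b c : A, ⁅⁅a, b⁆, c⁆ = 0) (a b : A) :
    ⁅a, b⁆ ∈ Subring.center A :=
  Subring.mem_center_iff.mpr fun c => (commute_iff_lie_eq.mpr (hA a b c)).symm

theorem lie_eq_zero_of_mem_center {c : A} (hc : c ∈ Subring.center A) (a : A) : ⁅c, a⁆ = 0 :=
  Commute.lie_eq (Subring.mem_center_iff.mp hc a).symm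

theorem mul_lie_of_mem_center {c : A} (hc : c ∈ Subring.center A) (a b : A) :
    ⁅c * a, b⁆ = c * ⁅a, b⁆ := by
  rw [Ring.lie_def, Ring.lie_def, mul_sub, mul_assoc, ← mul_assoc b, Subring.mem_center_iff.mp hc b,
    mul_assoc]

end Commutators

section TensorProduct

variable {R : Type*} [CommSemiring R] {G H : Type*} [Ring G] [Algebra R G] [Ring H] [Algebra R H]

theorem lie_tmul_tmul (a b : G) (u v : H) :
    ⁅a ⊗ₜ[R] u, b ⊗ₜ[R] v⁆ = ⁅a, b⁆ ⊗ₜ[R] (u * v) + (b * a) ⊗ₜ[R] ⁅u, v⁆ := by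
  simp only [Ring.lie_def, Algebra.TensorProduct.tmul_mul_tmul, TensorProduct.sub_tmul,
    TensorProduct.tmul_sub]
  abel

theorem lie_tmul_tmul_of_mem_center_left {a : G} (ha : a ∈ Subring.center G) (b : G) (u v : H) :
    ⁅a ⊗ₜ[R] u, b ⊗ₜ[R] v⁆ = (a * b) ⊗ₜ[R] ⁅u, v⁆ := by
  rw [lie_tmul_tmul, lie_eq_zero_of_mem_center ha, TensorProduct.zero_tmul, zero_add,
    Subring.mem_center_iff.mp ha]

theorem lie_tmul_tmul_of_mem_center_right (a b : G) {u : H} (hu : u ∈ Subring.center H) (v : H) :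
    ⁅a ⊗ₜ[R] u, b ⊗ₜ[R] v⁆ = ⁅a, b⁆ ⊗ₜ[R] (u * v) := by
  rw [lie_tmul_tmul, lie_eq_zero_of_mem_center hu, TensorProduct.tmul_zero, add_zero]

theorem lie_lie_mul_tmul_tmul {a : G} (ha : a ∈ Subring.center G) {x y : G}
    (hxy : ⁅x, y⁆ ∈ Subring.center G) (z : G) {u : H} (hu : u ∈ Subring.center H) (v w : H) :
    ⁅⁅(a * x) ⊗ₜ[R] u, y ⊗ₜ[R] v⁆, z ⊗ₜ[R] w⁆ = (a * ⁅x, y⁆ * z) ⊗ₜ[R] (u * ⁅v, w⁆) := by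
  rw [lie_tmul_tmul_of_mem_center_right _ _ hu, mul_lie_of_mem_center ha,
    lie_tmul_tmul_of_mem_center_left (mul_mem ha hxy), mul_lie_of_mem_center hu]

theorem lie_lie_tmul_mul_tmul {a : G} (ha : a ∈ Subring.center G) (y z : G) {u : H}
    (hu : u ∈ Subring.center H) {x v : H} (hxv : ⁅x, v⁆ ∈ Subring.center H) (w : H) :
    ⁅⁅a ⊗ₜ[R] (u * x), y ⊗ₜ[R] v⁆, z ⊗ₜ[R] w⁆ = (a * ⁅y, z⁆) ⊗ₜ[R] (u * ⁅x, v⁆ * w) := by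
  rw [lie_tmul_tmul_of_mem_center_left ha, mul_lie_of_mem_center hu,
    lie_tmul_tmul_of_mem_center_right _ _ (mul_mem hu hxv), mul_lie_of_mem_center ha]

end TensorProduct

section PairLieProd

variable {A : Type*} [Ring A]

def pairLieProd (f : ℕ → A) (k n : ℕ) : A :=
  (List.ofFn fun i : Fin n => ⁅f (2 * i + k), f (2 * i + k + 1)⁆).prod

theorem pairLieProd_zero (f : ℕ → A) (k : ℕ) : pairLieProd f k 0 = 1 := rfl

theorem pairLieProd_succ (f : ℕ → A) (k n : ℕ) :
    pairLieProd f k (n + 1) = pairLieProd f k n * ⁅f (2 * n + k), f (2 * n + k + 1)⁆ := by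
  rw [pairLieProd, pairLieProd, List.ofFn_succ', List.prod_concat]
  rfl

theorem pairLieProd_mem_center (hA : ∀ a b c : A, ⁅⁅a, b⁆, c⁆ = 0) (f : ℕ → A) (k n : ℕ) :
    pairLieProd f k n ∈ Subring.center A :=
  list_prod_mem <| by
    simpa [List.mem_ofFn] using fun i => lie_mem_center_of_lie_lie_eq_zero hA _ _

end PairLieProd

theorem lcomm_ofFn_tmul_odd {R : Type*} [CommSemiring R] {G H : Type*} [Ring G] [Algebra R G]
    [Ring H] [Algebra R H] (hG : ∀ a b c : G, ⁅⁅a, b⁆, c⁆ = 0) (hH : ∀ a b c : H, ⁅⁅a, b⁆, c⁆ = 0)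
    (g : ℕ → G) (h : ℕ → H) (n : ℕ) :
    lcomm (List.ofFn fun i : Fin (2 * n + 3) => g (i + 1) ⊗ₜ[R] h (i + 1))
      = (pairLieProd g 1 (n + 1) * g (2 * n + 3)) ⊗ₜ[R] (⁅h 1 * h 2, h 3⁆ * pairLieProd h 4 n)
        + (⁅g 2 * g 1, g 3⁆ * pairLieProd g 4 n) ⊗ₜ[R] (pairLieProd h 1 (n + 1) * h (2 * n + 3)) := by
  induction n with
  | zero =>
    change ⁅⁅_, _⁆, _⁆ = _
    simp only [pairLieProd_succ, pairLieProd_zero, one_mul, mul_one]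
    rw [lie_tmul_tmul, add_lie,
      lie_tmul_tmul_of_mem_center_left (lie_mem_center_of_lie_lie_eq_zero hG (g 1) (g 2)),
      lie_tmul_tmul_of_mem_center_right _ _ (lie_mem_center_of_lie_lie_eq_zero hH (h 1) (h 2))]
  | succ n ih =>
    let x : ℕ → G ⊗[R] H := fun k => g (k + 1) ⊗ₜ[R] h (k + 1)
    have hsplit : lcomm (List.ofFn fun i : Fin (2 * (n + 1) + 3) => x i)
        = ⁅⁅lcomm (List.ofFn fun i : Fin (2 * n + 3) => x i), x (2 * n + 3)⁆, x (2 * n + 4)⁆ :=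
      (lcomm_ofFn_succ_succ x (2 * n + 3)).trans
        (congrArg (⁅·, x (2 * n + 4)⁆) (lcomm_ofFn_succ_succ x (2 * n + 2)))
    rw [hsplit, ih, add_lie, add_lie,
      lie_lie_mul_tmul_tmul (pairLieProd_mem_center hG g 1 (n + 1))
        (lie_mem_center_of_lie_lie_eq_zero hG _ _) _
        (mul_mem (lie_mem_center_of_lie_lie_eq_zero hH _ _) (pairLieProd_mem_center hH h 4 n)),
      lie_lie_tmul_mul_tmul
        (mul_mem (lie_mem_center_of_lie_lie_eq_zero hG _ _) (pairLieProd_mem_center hG g 4 n)) _ _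
        (pairLieProd_mem_center hH h 1 (n + 1)) (lie_mem_center_of_lie_lie_eq_zero hH _ _),
      pairLieProd_succ g 1 (n + 1), pairLieProd_succ h 1 (n + 1), pairLieProd_succ g 4 n,
      pairLieProd_succ h 4 n]
    simp only [mul_assoc]
    rfl

end Development

/-- Lemma 2.1 of [DK17], odd case: formula for
`c₂ₙ₊₁ = [g₁ ⊗ h₁, …, g₂ₙ₊₁ ⊗ h₂ₙ₊₁]` in `G ⊗ H` when `n ≥ 1`. -/
theorem statement_5 (F : Type*) [Field F]
    (G H : Type*) [Ring G] [Algebra F G] [Ring H] [Algebra F H]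
    (hG : ∀ a b c : G, ⁅⁅a, b⁆, c⁆ = 0) (hH : ∀ a b c : H, ⁅⁅a, b⁆, c⁆ = 0)
    (n : ℕ) (hn : 1 ≤ n) (g : ℕ → G) (h : ℕ → H) :
    lcomm (List.ofFn fun i : Fin (2 * n + 1) => (g (i + 1) ⊗ₜ[F] h (i + 1) : G ⊗[F] H))
      = ((List.ofFn fun i : Fin n => ⁅g (2 * i + 1), g (2 * i + 2)⁆).prod * g (2 * n + 1))
          ⊗ₜ[F] (⁅h 1 * h 2, h 3⁆
            * (List.ofFn fun i : Fin (n - 1) => ⁅h (2 * i + 4), h (2 * i + 5)⁆).prod)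
        + (⁅g 2 * g 1, g 3⁆
            * (List.ofFn fun i : Fin (n - 1) => ⁅g (2 * i + 4), g (2 * i + 5)⁆).prod)
          ⊗ₜ[F] ((List.ofFn fun i : Fin n => ⁅h (2 * i + 1), h (2 * i + 2)⁆).prod
            * h (2 * n + 1)) := by
  obtain ⟨m, rfl⟩ : ∃ m, n = m + 1 := ⟨n - 1, (Nat.succ_pred_eq_of_pos hn).symm⟩
  -- `pairLieProd` unfolds to the products above, and `m + 1 - 1` reduces to `m`
  exact lcomm_ofFn_tmul_odd hG hH g h m
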